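/- arXiv:1810.06052 — 3 statements merged into one kernel-verified Lean document; each statement's English description precedes it below -/
import Mathlib

section
/- The restriction of the bijection θ to barred permutations with no active bars induces a bijection between the set of 1̲32-avoiding permutations of [n] and the set of RGFs of length n; moreover under this bijection MAJ(p) = ls(θ(p)), des(p) + 1 = bk(θ(p)), and p_n = pro(θ(p)). -/
open Finset

variable {n : ℕ}

/-- Positions of leftmost occurrences of letters in the word `w`. -/
def Lset (w : Fin n → ℕ) : Finset (Fin n) :=
  Finset.univ.filter fun i => ∀ j, j < i → w j ≠ w i

/-- Positions of rightmost occurrences of letters in the word `w`. -/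
def Rset (w : Fin n → ℕ) : Finset (Fin n) :=
  Finset.univ.filter fun i => ∀ j, i < j → w j ≠ w i

/-- The maximum letter of the word `w`. -/
def bk (w : Fin n → ℕ) : ℕ := Finset.univ.sup w

/-- The (1-indexed) position of the rightmost `1` in `w`. -/
def pro (w : Fin n → ℕ) : ℕ :=
  (Finset.univ.filter fun i => w i = 1).sup fun i => (i : ℕ) + 1

def lsi (w : Fin n → ℕ) (i : Fin n) : ℕ :=
  ((Lset w).filter fun j => j < i ∧ w j < w i).card

def rsi (w : Fin n → ℕ) (i : Fin n) : ℕ :=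
  ((Rset w).filter fun j => i < j ∧ w j < w i).card

def vlsi (w : Fin n → ℕ) (i : Fin n) : ℕ :=
  if i ∉ Rset w ∧ pro w < (i : ℕ) + 1 then lsi w i - 1
  else if i ∈ Rset w ∧ (i : ℕ) + 1 < pro w then lsi w i + 1
  else lsi w i

def vrsi (w : Fin n → ℕ) (i : Fin n) : ℕ :=
  if i ∉ Rset w ∧ pro w < (i : ℕ) + 1 then rsi w i + 1
  else if i ∈ Rset w ∧ (i : ℕ) + 1 < pro w then rsi w i - 1
  else rsi w i

def ls (w : Fin n → ℕ) : ℕ := ∑ i, lsi w i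
def rs (w : Fin n → ℕ) : ℕ := ∑ i, rsi w i
def vls (w : Fin n → ℕ) : ℕ := ∑ i, vlsi w i
def vrs (w : Fin n → ℕ) : ℕ := ∑ i, vrsi w i

/-- `w` is a restricted growth function: positive letters, `w₁ = 1`, and each
letter is at most one more than the maximum of the preceding letters. -/
def IsRGF (w : Fin n → ℕ) : Prop :=
  (∀ i, 1 ≤ w i) ∧ (∀ i : Fin n, (i : ℕ) = 0 → w i = 1) ∧
    ∀ i : Fin n, 0 < (i : ℕ) → w i ≤ (Finset.univ.filter fun j => j < i).sup w + 1

/-- The ascent set of `w`. -/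
def AscSet (w : Fin n → ℕ) : Finset (Fin n) :=
  Finset.univ.filter fun i => ∃ j : Fin n, (j : ℕ) = (i : ℕ) + 1 ∧ w i < w j

open Finset

variable {n : ℕ}

/-- The word (in one-line notation, with letters `1,...,n`) of a permutation of `[n]`. -/
def pw (p : Equiv.Perm (Fin n)) : Fin n → ℕ := fun i => (p i : ℕ) + 1

/-- Descent number of a word: positions `i` with `w_i > w_{i+1}`. -/
def desW (w : Fin n → ℕ) : ℕ :=
  (Finset.univ.filter fun i : Fin n => ∃ j : Fin n, (j : ℕ) = (i : ℕ) + 1 ∧ w j < w i).card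

/-- Major index of a word: the sum of the (1-indexed) descent positions. -/
def majW (w : Fin n → ℕ) : ℕ :=
  ∑ i ∈ Finset.univ.filter
      (fun i : Fin n => ∃ j : Fin n, (j : ℕ) = (i : ℕ) + 1 ∧ w j < w i), ((i : ℕ) + 1)

/-- Occurrences of the vincular pattern 2-31: `i < j` with `w_{j+1} < w_i < w_j`. -/
def pat2_31 (w : Fin n → ℕ) : ℕ :=
  ((Finset.univ ×ˢ Finset.univ).filter fun q : Fin n × Fin n =>
    q.1 < q.2 ∧ ∃ j' : Fin n, (j' : ℕ) = (q.2 : ℕ) + 1 ∧ w j' < w q.1 ∧ w q.1 < w q.2).card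

/-- Occurrences of the vincular pattern 2-13: `i < j` with `w_j < w_i < w_{j+1}`. -/
def pat2_13 (w : Fin n → ℕ) : ℕ :=
  ((Finset.univ ×ˢ Finset.univ).filter fun q : Fin n × Fin n =>
    q.1 < q.2 ∧ ∃ j' : Fin n, (j' : ℕ) = (q.2 : ℕ) + 1 ∧ w q.2 < w q.1 ∧ w q.1 < w j').card

/-- Occurrences of the vincular pattern 1-32: `i < j` with `w_i < w_{j+1} < w_j`. -/
def pat1_32 (w : Fin n → ℕ) : ℕ :=
  ((Finset.univ ×ˢ Finset.univ).filter fun q : Fin n × Fin n =>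
    q.1 < q.2 ∧ ∃ j' : Fin n, (j' : ℕ) = (q.2 : ℕ) + 1 ∧ w q.1 < w j' ∧ w j' < w q.2).card

/-- Occurrences of the vincular pattern 3-21: `i < j` with `w_{j+1} < w_j < w_i`. -/
def pat3_21 (w : Fin n → ℕ) : ℕ :=
  ((Finset.univ ×ˢ Finset.univ).filter fun q : Fin n × Fin n =>
    q.1 < q.2 ∧ ∃ j' : Fin n, (j' : ℕ) = (q.2 : ℕ) + 1 ∧ w j' < w q.2 ∧ w q.2 < w q.1).card

/-- The Babson–Steingrímsson statistic BAST = (21) + (2-13) + (1-32) + (3-21). -/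
def BAST (w : Fin n → ℕ) : ℕ := desW w + pat2_13 w + pat1_32 w + pat3_21 w

/-- `w` avoids the vincular pattern 1-32: there is no `i < j` with `w_i < w_{j+1} < w_j`. -/
def Avoids132 (w : Fin n → ℕ) : Prop :=
  ∀ i j j' : Fin n, i < j → (j' : ℕ) = (j : ℕ) + 1 → ¬(w i < w j' ∧ w j' < w j)

/-- `w` is an unrestricted growth function: positive letters, and every value
`1 ≤ j ≤ bk(w)` occurs in `w`. -/
def IsURG (w : Fin n → ℕ) : Prop :=
  (∀ i, 1 ≤ w i) ∧ ∀ j, 1 ≤ j → j ≤ Finset.univ.sup w → ∃ i, w i = j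

/-- `bars` is a valid set of bars for the permutation `p`: each bar sits between
two consecutive letters, and there is a bar at every descent of `p`. -/
def IsBarred (p : Equiv.Perm (Fin n)) (bars : Finset (Fin n)) : Prop :=
  (∀ i ∈ bars, (i : ℕ) + 1 < n) ∧
    ∀ i j : Fin n, (j : ℕ) = (i : ℕ) + 1 → p j < p i → i ∈ bars

/-- The word θ(p̄): the letter `i` (here `i : Fin n` encodes the letter `i+1`) is sent to
one plus the number of bars lying to the right of the letter `i+1` in the barred permutation. -/
def theta (p : Equiv.Perm (Fin n)) (bars : Finset (Fin n)) : Fin n → ℕ :=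
  fun i => 1 + (bars.filter fun b => p.symm i ≤ b).card

/-- The set of descent positions of `p`, used as the (fixed) bars. -/
def descBars (p : Equiv.Perm (Fin n)) : Finset (Fin n) :=
  Finset.univ.filter fun i : Fin n => ∃ j : Fin n, (j : ℕ) = (i : ℕ) + 1 ∧ p j < p i

/-- θ restricted to barred permutations with no active bars (bars exactly at descents). -/
def theta0 (p : Equiv.Perm (Fin n)) : Fin n → ℕ := theta p (descBars p)


/-! With bars only at the descents, `θ₀ p` gives the letter in position `q` the value
`1 + #(descents ≥ q)`. So the runs of `p` are the level sets of `θ₀ p`, and `p` is recovered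
from `θ₀ p` by listing the letters by decreasing value, increasing within a value (`sortPerm`);
hence `θ₀` is injective. In a 1̲32-avoider the first letter after a descent is smaller than
every letter before it, which is exactly what makes `θ₀ p` a restricted growth function.
Conversely, sorting an RGF `w` in this way gives a 1̲32-avoider whose descents are the places
where the value drops, always by one, so its image under `θ₀` is `w` again. Finally
`ls w = ∑ (wᵢ - 1)` for an RGF, and `∑ (θ₀ p - 1)` counts each descent `b` once for each of
the `b + 1` positions weakly left of it, which is `MAJ p`. -/

lemma mem_descBars_iff {p : Equiv.Perm (Fin n)} {b j : Fin n} (hj : (j : ℕ) = b + 1) :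
    b ∈ descBars p ↔ p j < p b := by
  simp only [descBars, mem_filter, mem_univ, true_and]
  refine ⟨fun ⟨j', hj', h⟩ => ?_, fun h => ⟨j, hj, h⟩⟩
  rwa [show j = j' from Fin.ext (by omega)]

lemma succ_lt_of_mem_descBars {p : Equiv.Perm (Fin n)} {b : Fin n} (hb : b ∈ descBars p) :
    (b : ℕ) + 1 < n := by
  obtain ⟨j, hj, -⟩ := (mem_filter.1 hb).2
  omega

lemma filter_pw_descent_eq_descBars (p : Equiv.Perm (Fin n)) :
    ({i | ∃ j : Fin n, (j : ℕ) = (i : ℕ) + 1 ∧ pw p j < pw p i} : Finset (Fin n)) =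
      descBars p := by
  simp only [descBars, pw, Fin.lt_def, add_lt_add_iff_right]

lemma avoids132_pw_iff {p : Equiv.Perm (Fin n)} :
    Avoids132 (pw p) ↔
      ∀ i j j' : Fin n, i < j → (j' : ℕ) = j + 1 → ¬(p i < p j' ∧ p j' < p j) := by
  simp only [Avoids132, pw, Fin.lt_def, add_lt_add_iff_right]

section Permutation

variable (p : Equiv.Perm (Fin n))

def barWeight (q : Fin n) : ℕ := 1 + #{b ∈ descBars p | q ≤ b}

lemma theta0_apply (i : Fin n) : theta0 p i = barWeight p (p.symm i) := rfl

lemma theta0_apply_apply (q : Fin n) : theta0 p (p q) = barWeight p q := by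
  rw [theta0_apply, Equiv.symm_apply_apply]

lemma one_le_barWeight (q : Fin n) : 1 ≤ barWeight p q := Nat.le_add_right 1 _

lemma barWeight_antitone : Antitone (barWeight p) := fun _ _ hqr =>
  Nat.add_le_add_left (card_le_card fun _ hb => by
    rw [mem_filter] at hb ⊢
    exact ⟨hb.1, hqr.trans hb.2⟩) 1

lemma barWeight_succ {b j : Fin n} (hj : (j : ℕ) = b + 1) :
    barWeight p b = barWeight p j + if b ∈ descBars p then 1 else 0 := by
  have hsplit : {x ∈ descBars p | b ≤ x} = {x ∈ descBars p | j ≤ x ∨ x = b} := by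
    ext x
    simp only [mem_filter, and_congr_right_iff, Fin.le_def, Fin.ext_iff]
    omega
  have hnot : b ∉ {x ∈ descBars p | j ≤ x} := by simp [Fin.le_def, hj]
  unfold barWeight
  split_ifs with hb
  · rw [hsplit, filter_or, filter_eq' _ b, if_pos hb, union_singleton,
      card_insert_of_notMem hnot]
    ring
  · rw [hsplit, filter_or, filter_eq' _ b, if_neg hb, union_empty]
    rfl

lemma barWeight_of_succ_eq {q : Fin n} (hq : (q : ℕ) + 1 = n) : barWeight p q = 1 := by
  have : {b ∈ descBars p | q ≤ b} = ∅ :=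
    filter_eq_empty_iff.2 fun b hb hqb => by
      have := succ_lt_of_mem_descBars hb
      rw [Fin.le_def] at hqb
      omega
  simp [barWeight, this]

lemma barWeight_le (q : Fin n) : barWeight p q ≤ #(descBars p) + 1 := by
  have := card_filter_le (descBars p) (q ≤ ·)
  unfold barWeight
  omega

lemma barWeight_of_val_eq_zero {q : Fin n} (hq : (q : ℕ) = 0) :
    barWeight p q = #(descBars p) + 1 := by
  rw [barWeight, filter_true_of_mem fun b _ => Fin.le_def.2 (by omega), add_comm]

lemma apply_le_of_barWeight_eq {q r : Fin n} (hqr : q ≤ r)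
    (h : barWeight p q = barWeight p r) : p q ≤ p r := by
  suffices ∀ d, ∀ r : Fin n, (r : ℕ) = q + d → barWeight p q = barWeight p r → p q ≤ p r from
    this (r - q) r (by rw [Fin.le_def] at hqr; omega) h
  intro d
  induction d with
  | zero => intro r hr _; rw [show r = q from Fin.ext hr]
  | succ d ih =>
    intro r hr h
    let r' : Fin n := ⟨q + d, by omega⟩
    have hstep := barWeight_succ p (b := r') (j := r) hr
    have hle : barWeight p r' ≤ barWeight p q :=
      barWeight_antitone p (Fin.le_def.2 (by simp [r']))
    have hnot : r' ∉ descBars p := fun hr' => by rw [if_pos hr'] at hstep; omega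
    rw [if_neg hnot] at hstep
    exact (ih r' rfl (by omega)).trans
      (not_lt.1 fun hlt => hnot ((mem_descBars_iff hr).2 hlt))

lemma barWeight_eq_of_succ {f : Fin n → ℕ} (hlast : ∀ q : Fin n, (q : ℕ) + 1 = n → f q = 1)
    (hstep : ∀ b j : Fin n, (j : ℕ) = b + 1 → f b = f j + if b ∈ descBars p then 1 else 0)
    (q : Fin n) : barWeight p q = f q := by
  suffices ∀ k, ∀ q : Fin n, (q : ℕ) + k + 1 = n → barWeight p q = f q from
    this (n - 1 - q) q (by omega)
  intro k
  induction k with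
  | zero => intro q hq; rw [barWeight_of_succ_eq p hq, hlast q hq]
  | succ k ih =>
    intro q hq
    let j : Fin n := ⟨q + 1, by omega⟩
    rw [barWeight_succ p (j := j) rfl, hstep q j rfl, ih j (by simp [j]; omega)]

end Permutation

/-- `Tuple.sort` orders lexicographically by value, then by index, so `sortPerm w` lists the
letters by decreasing `w`, equal values in increasing order. -/
def sortPerm (w : Fin n → ℕ) : Equiv.Perm (Fin n) := Tuple.sort (OrderDual.toDual ∘ w)

lemma eq_sortPerm_iff {w : Fin n → ℕ} {σ : Equiv.Perm (Fin n)} :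
    σ = sortPerm w ↔ Antitone (w ∘ σ) ∧ ∀ i j, i < j → w (σ i) = w (σ j) → σ i < σ j :=
  Tuple.eq_sort_iff

lemma sortPerm_antitone (w : Fin n → ℕ) {q r : Fin n} (h : q ≤ r) :
    w (sortPerm w r) ≤ w (sortPerm w q) :=
  (eq_sortPerm_iff.1 rfl).1 h

lemma sortPerm_lt_of_eq (w : Fin n → ℕ) {q r : Fin n} (h : q < r)
    (he : w (sortPerm w q) = w (sortPerm w r)) : sortPerm w q < sortPerm w r :=
  (eq_sortPerm_iff.1 rfl).2 q r h he

lemma sortPerm_theta0 (p : Equiv.Perm (Fin n)) : sortPerm (theta0 p) = p := by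
  refine (eq_sortPerm_iff.2 ⟨fun q r hqr => ?_, fun q r hqr heq => ?_⟩).symm
  · simpa only [Function.comp_apply, theta0_apply_apply] using barWeight_antitone p hqr
  · simp only [theta0_apply_apply] at heq
    exact (apply_le_of_barWeight_eq p hqr.le heq).lt_of_ne (p.injective.ne hqr.ne)

lemma theta0_injective : Function.Injective (theta0 (n := n)) := fun p p' h => by
  rw [← sortPerm_theta0 p, h, sortPerm_theta0]

section Avoider

variable {p : Equiv.Perm (Fin n)}

/-- The witness is the letter right after the first descent at or right of `q`; avoidance of
1̲32 is what makes it smaller than `p q`. -/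
lemma exists_lt_theta0_add_one_eq (hp : Avoids132 (pw p)) {q : Fin n}
    (hq : 2 ≤ barWeight p q) : ∃ i < p q, theta0 p i + 1 = barWeight p q := by
  have hS : {x ∈ descBars p | q ≤ x}.Nonempty := by
    rw [← card_pos]
    unfold barWeight at hq
    omega
  set b := {x ∈ descBars p | q ≤ x}.min' hS
  obtain ⟨hb, hqb⟩ := mem_filter.1 (min'_mem _ hS)
  have hbn := succ_lt_of_mem_descBars hb
  let j : Fin n := ⟨b + 1, hbn⟩
  have hqb_eq : barWeight p q = barWeight p b := by
    unfold barWeight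
    congr 2
    ext x
    simp only [mem_filter, and_congr_right_iff]
    exact fun hx => ⟨fun hqx => min'_le _ _ (mem_filter.2 ⟨hx, hqx⟩), hqb.trans⟩
  have hjb : p j < p b := (mem_descBars_iff rfl).1 hb
  refine ⟨p j, ?_, ?_⟩
  · refine lt_of_le_of_ne (not_lt.1 fun hlt => ?_) (p.injective.ne (Fin.ne_of_gt ?_))
    · rcases hqb.lt_or_eq with hqb' | hqb'
      · exact avoids132_pw_iff.1 hp q b j hqb' rfl ⟨hlt, hjb⟩
      · exact lt_asymm hjb (by rwa [hqb'] at hlt)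
    · exact Fin.lt_def.2 (by rw [Fin.le_def] at hqb; simp [j]; omega)
  · rw [theta0_apply_apply, hqb_eq, barWeight_succ p (j := j) rfl, if_pos hb]

lemma isRGF_theta0 (hp : Avoids132 (pw p)) : IsRGF (theta0 p) := by
  refine ⟨fun i => one_le_barWeight p _, fun i hi => ?_, fun i _ => ?_⟩
  · by_contra hne
    have h2 : 2 ≤ barWeight p (p.symm i) := by
      have := one_le_barWeight p (p.symm i)
      rw [theta0_apply] at hne
      omega
    obtain ⟨i', hi', -⟩ := exists_lt_theta0_add_one_eq hp h2
    rw [Equiv.apply_symm_apply, Fin.lt_def] at hi'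
    omega
  · rcases Nat.lt_or_ge (barWeight p (p.symm i)) 2 with h | h
    · rw [theta0_apply]; omega
    · obtain ⟨i', hi', hwt⟩ := exists_lt_theta0_add_one_eq hp h
      rw [Equiv.apply_symm_apply] at hi'
      have : theta0 p i' ≤ ({j | j < i} : Finset (Fin n)).sup (theta0 p) :=
        le_sup (mem_filter.2 ⟨mem_univ _, hi'⟩)
      rw [theta0_apply]
      omega

end Avoider

lemma sum_barWeight_sub_one (p : Equiv.Perm (Fin n)) :
    ∑ q, (barWeight p q - 1) = ∑ b ∈ descBars p, ((b : ℕ) + 1) := by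
  calc ∑ q, (barWeight p q - 1)
      = ∑ q, ∑ b ∈ descBars p, if q ≤ b then 1 else 0 := by
        simp only [barWeight, add_tsub_cancel_left, card_filter]
    _ = ∑ b ∈ descBars p, ∑ q, if q ≤ b then 1 else 0 := sum_comm
    _ = ∑ b ∈ descBars p, ((b : ℕ) + 1) := by
        refine sum_congr rfl fun b _ => ?_
        rw [← card_filter, filter_ge_eq_Iic, Fin.card_Iic]

lemma desW_pw (p : Equiv.Perm (Fin n)) : desW (pw p) = #(descBars p) := by
  rw [desW, filter_pw_descent_eq_descBars]

lemma bk_theta0 (p : Equiv.Perm (Fin n)) (hn : 0 < n) : bk (theta0 p) = #(descBars p) + 1 := by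
  refine le_antisymm (Finset.sup_le fun i _ => barWeight_le p _) ?_
  rw [← barWeight_of_val_eq_zero p (q := ⟨0, hn⟩) rfl, ← theta0_apply_apply]
  exact le_sup (mem_univ _)

lemma pro_theta0 (p : Equiv.Perm (Fin n)) {q : Fin n} (hq : (q : ℕ) + 1 = n) :
    pro (theta0 p) = pw p q := by
  have hlast : theta0 p (p q) = 1 := by rw [theta0_apply_apply, barWeight_of_succ_eq p hq]
  refine le_antisymm (Finset.sup_le fun i hi => ?_) (le_sup (f := fun i : Fin n => (i : ℕ) + 1)
    (mem_filter.2 ⟨mem_univ _, hlast⟩))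
  rw [mem_filter, theta0_apply] at hi
  have hle : p (p.symm i) ≤ p q := apply_le_of_barWeight_eq p
    (Fin.le_def.2 (by have := (p.symm i).isLt; omega)) (by rw [hi.2, barWeight_of_succ_eq p hq])
  rw [Equiv.apply_symm_apply, Fin.le_def] at hle
  simp only [pw]
  omega

namespace IsRGF

variable {w : Fin n → ℕ}

lemma exists_lt_eq (hw : IsRGF w) {j : Fin n} {u : ℕ} (hu : 1 ≤ u) (huj : u < w j) :
    ∃ i < j, w i = u := by
  induction j using WellFoundedLT.induction with
  | ind j ih =>
    have hj : 0 < (j : ℕ) := Nat.pos_of_ne_zero fun h => by have := hw.2.1 j h; omega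
    have hsup : u ≤ ({k | k < j} : Finset (Fin n)).sup w := by have := hw.2.2 j hj; omega
    obtain ⟨k, hk, huk⟩ := (Finset.le_sup_iff (by rw [Nat.bot_eq_zero]; omega)).1 hsup
    rw [mem_filter] at hk
    rcases huk.lt_or_eq with huk | huk
    · obtain ⟨i, hik, hi⟩ := ih k hk.2 huk
      exact ⟨i, hik.trans hk.2, hi⟩
    · exact ⟨k, hk.2, huk.symm⟩

lemma lsi_eq (hw : IsRGF w) (i : Fin n) : lsi w i = w i - 1 := by
  rw [lsi, ← Nat.card_Ico]
  refine card_nbij w (fun j hj => ?_) (fun j hj j' hj' he => ?_) (fun u hu => ?_)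
  · simp only [mem_coe, mem_filter] at hj
    exact mem_Ico.2 ⟨hw.1 j, hj.2.2⟩
  · simp only [mem_coe, Lset, mem_filter, mem_univ, true_and] at hj hj'
    rcases lt_trichotomy j j' with h | h | h
    · exact absurd he (hj'.1 j h)
    · exact h
    · exact absurd he.symm (hj.1 j' h)
  · obtain ⟨hu1, hui⟩ := mem_Ico.1 hu
    obtain ⟨k, hki, hk⟩ := hw.exists_lt_eq hu1 hui
    have hne : ({j | w j = u} : Finset (Fin n)).Nonempty := ⟨k, by simp [hk]⟩
    set m := ({j | w j = u} : Finset (Fin n)).min' hne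
    have hm : w m = u := (mem_filter.1 (min'_mem _ hne)).2
    have hmk : m ≤ k := min'_le _ k (by simp [hk])
    refine ⟨m, ?_, hm⟩
    simp only [mem_coe, Lset, mem_filter, mem_univ, true_and]
    refine ⟨fun j hj hwj => not_lt.2 (min'_le _ j (by simp [hwj, hm])) hj,
      hmk.trans_lt hki, hm ▸ hui⟩

lemma ls_eq (hw : IsRGF w) : ls w = ∑ i, (w i - 1) :=
  sum_congr rfl fun i _ => hw.lsi_eq i

lemma sortPerm_lt_of_drop (hw : IsRGF w) {b j : Fin n} (hj : (j : ℕ) = b + 1)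
    (hdrop : w (sortPerm w j) < w (sortPerm w b)) {c : Fin n} (hc : w (sortPerm w j) < w c) :
    sortPerm w j < c := by
  obtain ⟨i, hic, hi⟩ := hw.exists_lt_eq (hw.1 _) hc
  set r := (sortPerm w).symm i
  have hr : w (sortPerm w r) = w (sortPerm w j) := by simp [r, hi]
  have hbr : b < r := lt_of_not_ge fun h => by have := sortPerm_antitone w h; omega
  have hjr : j ≤ r := Fin.le_def.2 (by rw [Fin.lt_def] at hbr; omega)
  refine lt_of_le_of_lt ?_ (show sortPerm w r < c by simpa [r] using hic)
  rcases hjr.lt_or_eq with hjr | hjr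
  · exact (sortPerm_lt_of_eq w hjr hr.symm).le
  · rw [hjr]

lemma apply_sortPerm_succ (hw : IsRGF w) {b j : Fin n} (hj : (j : ℕ) = b + 1) :
    w (sortPerm w b) = w (sortPerm w j) + if b ∈ descBars (sortPerm w) then 1 else 0 := by
  have hbj : b < j := Fin.lt_def.2 (by omega)
  simp only [mem_descBars_iff hj]
  rcases (sortPerm_antitone w hbj.le).lt_or_eq with hdrop | heq
  · rw [if_pos (hw.sortPerm_lt_of_drop hj hdrop hdrop)]
    by_contra hne
    obtain ⟨i, -, hi⟩ := hw.exists_lt_eq (j := sortPerm w b) (u := w (sortPerm w j) + 1)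
      (by omega) (by omega)
    set r := (sortPerm w).symm i
    have hr : w (sortPerm w r) = w (sortPerm w j) + 1 := by simp [r, hi]
    have h1 : ¬ r ≤ b := fun h => by have := sortPerm_antitone w h; omega
    have h2 : ¬ j ≤ r := fun h => by have := sortPerm_antitone w h; omega
    rw [not_le, Fin.lt_def] at h1 h2
    omega
  · rw [if_neg (not_lt.2 (sortPerm_lt_of_eq w hbj heq.symm).le)]
    exact heq.symm

lemma apply_sortPerm_of_succ_eq (hw : IsRGF w) {q : Fin n} (hq : (q : ℕ) + 1 = n) :
    w (sortPerm w q) = 1 := by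
  let z : Fin n := ⟨0, by omega⟩
  have hz : w (sortPerm w ((sortPerm w).symm z)) = 1 := by simpa using hw.2.1 z rfl
  have := sortPerm_antitone w
    (Fin.le_def.2 (by have := ((sortPerm w).symm z).isLt; omega) : (sortPerm w).symm z ≤ q)
  have := hw.1 (sortPerm w q)
  omega

lemma theta0_sortPerm (hw : IsRGF w) : theta0 (sortPerm w) = w := by
  funext i
  rw [theta0_apply, barWeight_eq_of_succ _ (f := w ∘ sortPerm w)
    (fun q hq => hw.apply_sortPerm_of_succ_eq hq) (fun b j hj => hw.apply_sortPerm_succ hj)]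
  simp

lemma avoids132_sortPerm (hw : IsRGF w) : Avoids132 (pw (sortPerm w)) := by
  rw [avoids132_pw_iff]
  rintro a b j hab hj ⟨hlt, hdesc⟩
  have hstep := hw.apply_sortPerm_succ hj
  rw [if_pos ((mem_descBars_iff hj).2 hdesc)] at hstep
  have hab' := sortPerm_antitone w hab.le
  exact absurd hlt (not_lt.2 (hw.sortPerm_lt_of_drop hj (by omega) (by omega)).le)

end IsRGF

lemma majW_pw_eq_ls_theta0 {p : Equiv.Perm (Fin n)} (hp : Avoids132 (pw p)) :
    majW (pw p) = ls (theta0 p) := by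
  rw [(isRGF_theta0 hp).ls_eq, majW, filter_pw_descent_eq_descBars, ← sum_barWeight_sub_one,
    ← Equiv.sum_comp p (fun i => theta0 p i - 1)]
  simp only [theta0_apply_apply]

/-- θ induces a bijection between 1-32-avoiding permutations of [n] and RGFs of
length n, sending MAJ to ls, des + 1 to bk, and the last letter to pro. -/
theorem stmt15 (n : ℕ) (hn : 0 < n) :
    Set.BijOn (fun p : Equiv.Perm (Fin n) => theta0 p)
        {p | Avoids132 (pw p)} {w : Fin n → ℕ | IsRGF w} ∧
      ∀ p : Equiv.Perm (Fin n), Avoids132 (pw p) →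
        majW (pw p) = ls (theta0 p) ∧
        desW (pw p) + 1 = bk (theta0 p) ∧
        pw p ⟨n - 1, Nat.sub_lt hn Nat.one_pos⟩ = pro (theta0 p) := by
  refine ⟨⟨fun p hp => isRGF_theta0 hp, theta0_injective.injOn,
    fun w hw => ⟨sortPerm w, hw.avoids132_sortPerm, hw.theta0_sortPerm⟩⟩,
    fun p hp => ⟨majW_pw_eq_ls_theta0 hp, ?_, ?_⟩⟩
  · rw [desW_pw, bk_theta0 p hn]
  · exact (pro_theta0 p (Nat.sub_add_cancel hn)).symm
end

section
/- For every π ∈ S_n, BAST(π) + STAT(r(π)) = binom(n,2) and BAST(r(π)) + STAT(π) = binom(n,2), where r is the reversal map r(π_1...π_n) = π_n...π_1. -/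
open Finset

variable {n : ℕ}

/-- Occurrences of the vincular pattern 13-2: `i+1 < j` with `w_i < w_j < w_{i+1}`. -/
def pat13_2 (w : Fin n → ℕ) : ℕ :=
  ((Finset.univ ×ˢ Finset.univ).filter fun q : Fin n × Fin n =>
    ∃ i' : Fin n, (i' : ℕ) = (q.1 : ℕ) + 1 ∧ i' < q.2 ∧ w q.1 < w q.2 ∧ w q.2 < w i').card

/-- Occurrences of the vincular pattern 21-3: `i+1 < j` with `w_{i+1} < w_i < w_j`. -/
def pat21_3 (w : Fin n → ℕ) : ℕ :=
  ((Finset.univ ×ˢ Finset.univ).filter fun q : Fin n × Fin n =>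
    ∃ i' : Fin n, (i' : ℕ) = (q.1 : ℕ) + 1 ∧ i' < q.2 ∧ w i' < w q.1 ∧ w q.1 < w q.2).card

/-- Occurrences of the vincular pattern 32-1: `i+1 < j` with `w_j < w_{i+1} < w_i`. -/
def pat32_1 (w : Fin n → ℕ) : ℕ :=
  ((Finset.univ ×ˢ Finset.univ).filter fun q : Fin n × Fin n =>
    ∃ i' : Fin n, (i' : ℕ) = (q.1 : ℕ) + 1 ∧ i' < q.2 ∧ w q.2 < w i' ∧ w i' < w q.1).card

/-- The Babson–Steingrímsson statistic STAT = (21) + (13-2) + (21-3) + (32-1). -/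
def STAT (w : Fin n → ℕ) : ℕ := desW w + pat13_2 w + pat21_3 w + pat32_1 w

/-- The descent set of a word. -/
def DesSet (w : Fin n → ℕ) : Finset (Fin n) :=
  Finset.univ.filter fun i : Fin n => ∃ j : Fin n, (j : ℕ) = (i : ℕ) + 1 ∧ w j < w i

/-- Id(p) = Des(p⁻¹), the descent set of the inverse permutation. -/
def IdSet (p : Equiv.Perm (Fin n)) : Finset (Fin n) := DesSet (pw p⁻¹)


/-! ### Auxiliary development for `stmt17` -/

/-- Truncated successor on `Fin n`. -/
def nxF (q : Fin n) : Fin n := ⟨min ((q : ℕ) + 1) (n - 1), by have := q.isLt; omega⟩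

lemma nxF_val (q : Fin n) (h : (q : ℕ) + 1 < n) : (nxF q : ℕ) = (q : ℕ) + 1 := by
  simp only [nxF]; omega

lemma nxF_rev_val {x : Fin n} (h : (x : ℕ) + 1 < n) :
    ((nxF x).rev : ℕ) = n - 2 - (x : ℕ) := by
  rw [Fin.val_rev, nxF_val _ h]; omega

lemma nxF_rev_nxF {x : Fin n} (h : (x : ℕ) + 1 < n) : nxF ((nxF x).rev) = x.rev := by
  have h1 : ((nxF x).rev : ℕ) + 1 < n := by rw [nxF_rev_val h]; omega
  apply Fin.ext
  rw [nxF_val _ h1, nxF_rev_val h, Fin.val_rev]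
  omega

/-- The base set of triples (encoded as pairs `(i, j)` with `i < j` and `j + 1 < n`). -/
def Tset (n : ℕ) : Finset (Fin n × Fin n) :=
  (Finset.univ ×ˢ Finset.univ).filter fun q => q.1 < q.2 ∧ (q.2 : ℕ) + 1 < n

/-- The base set for descents. -/
def Aset (n : ℕ) : Finset (Fin n) :=
  Finset.univ.filter fun i : Fin n => (i : ℕ) + 1 < n

lemma mem_Tset {q : Fin n × Fin n} : q ∈ Tset n ↔ q.1 < q.2 ∧ (q.2 : ℕ) + 1 < n := by
  simp [Tset]

lemma Aset_card : (Aset n).card = n - 1 := by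
  rcases Nat.eq_zero_or_pos n with h | h
  · subst h; simp [Aset]
  rw [show Aset n = Finset.univ.filter (fun i : Fin n => i < ⟨n - 1, by omega⟩) by
    ext i; simp [Aset, Fin.lt_def]; omega]
  rw [show Finset.univ.filter (fun i : Fin n => i < (⟨n - 1, by omega⟩ : Fin n))
      = Iio ⟨n - 1, by omega⟩ by ext i; simp]
  exact Fin.card_Iio _

lemma Tset_card : (Tset n).card = (n - 1).choose 2 := by
  rw [Tset, Finset.card_filter, Finset.sum_product_right]
  have h1 : ∀ j : Fin n, (∑ i : Fin n, if i < j ∧ (j : ℕ) + 1 < n then 1 else 0)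
      = if (j : ℕ) + 1 < n then (j : ℕ) else 0 := by
    intro j
    rcases Classical.em ((j : ℕ) + 1 < n) with h | h
    · simp only [h, and_true, if_true]
      rw [← Finset.card_filter]
      rw [show Finset.univ.filter (fun i : Fin n => i < j) = Iio j by ext i; simp]
      exact Fin.card_Iio j
    · simp [h]
  simp only [h1]
  rw [Fin.sum_univ_eq_sum_range (fun k => if k + 1 < n then k else 0)]
  rw [← Finset.sum_filter]
  rw [show (Finset.range n).filter (fun k => k + 1 < n) = Finset.range (n - 1) by
    ext k; simp; omega]
  rw [Nat.choose_two_right, ← Finset.sum_range_id_mul_two (n - 1)]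
  omega

/-- Pattern count over the triple base set, for a pattern of `(w_i, w_j, w_{j+1})`. -/
def pcnt (w : Fin n → ℕ) (P : ℕ → ℕ → ℕ → Prop) [∀ a b c : ℕ, Decidable (P a b c)] : ℕ :=
  ((Tset n).filter fun q => P (w q.1) (w q.2) (w (nxF q.2))).card

/-- Generic rewrite of the BAST-style `∃`-form counts to `pcnt`. -/
lemma bast_pat_eq (w : Fin n → ℕ) (P : ℕ → ℕ → ℕ → Prop) [∀ a b c : ℕ, Decidable (P a b c)] :
    ((Finset.univ ×ˢ Finset.univ).filter fun q : Fin n × Fin n =>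
      q.1 < q.2 ∧ ∃ j' : Fin n, (j' : ℕ) = (q.2 : ℕ) + 1 ∧
        P (w q.1) (w q.2) (w j')).card = pcnt w P := by
  rw [pcnt, Tset, Finset.filter_filter]
  congr 1
  apply Finset.filter_congr
  intro q _
  constructor
  · rintro ⟨h1, j', hj', hp⟩
    have hlt : (q.2 : ℕ) + 1 < n := by have := j'.isLt; omega
    have hje : j' = nxF q.2 := Fin.ext (by rw [nxF_val _ hlt, hj'])
    exact ⟨⟨h1, hlt⟩, hje ▸ hp⟩
  · rintro ⟨⟨h1, hlt⟩, hp⟩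
    exact ⟨h1, nxF q.2, by rw [nxF_val _ hlt], hp⟩

/-- Generic rewrite of the STAT-style `∃`-form counts of the reversed word to `pcnt` of `w`.
Here `P` receives `(v_{q1}, v_{q1+1}, v_{q2})`, which is `(w_{j+1}, w_j, w_i)`. -/
lemma stat_pat_eq (w : Fin n → ℕ) (P : ℕ → ℕ → ℕ → Prop) [∀ a b c : ℕ, Decidable (P a b c)] :
    ((Finset.univ ×ˢ Finset.univ).filter fun q : Fin n × Fin n =>
      ∃ i' : Fin n, (i' : ℕ) = (q.1 : ℕ) + 1 ∧ i' < q.2 ∧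
        P (w q.1.rev) (w i'.rev) (w q.2.rev)).card
      = pcnt w (fun a b c => P c b a) := by
  rw [pcnt]
  apply Finset.card_bij' (i := fun q _ => ((q.2.rev : Fin n), ((nxF q.1).rev : Fin n)))
    (j := fun q _ => (((nxF q.2).rev : Fin n), (q.1.rev : Fin n)))
  · -- forward map lands in target
    rintro q hq
    simp only [Finset.mem_filter, Finset.mem_product] at hq
    obtain ⟨-, i', hi', hlt, hp⟩ := hq
    have h1 : (q.1 : ℕ) + 1 < n := by
      have := q.2.isLt; have := Fin.lt_def.mp hlt; omega
    have hie : i' = nxF q.1 := Fin.ext (by rw [nxF_val _ h1, hi'])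
    have hv1 : ((nxF q.1).rev : ℕ) = n - 2 - (q.1 : ℕ) := nxF_rev_val h1
    have hv2 : (q.2.rev : ℕ) = n - 1 - (q.2 : ℕ) := by rw [Fin.val_rev]; omega
    have hl2 := Fin.lt_def.mp hlt
    have hq2 := q.2.isLt
    simp only [Finset.mem_filter, mem_Tset]
    refine ⟨⟨Fin.lt_def.mpr ?_, ?_⟩, ?_⟩
    · rw [hv1, hv2]; omega
    · rw [hv1]; omega
    · rw [nxF_rev_nxF h1]
      rw [hie] at hp
      exact hp
  · -- backward map lands in source
    rintro q hq
    rw [Finset.mem_filter, mem_Tset] at hq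
    obtain ⟨⟨hlt, h2⟩, hp⟩ := hq
    have hl2 := Fin.lt_def.mp hlt
    have hq2 := q.2.isLt
    have hv1 : ((nxF q.2).rev : ℕ) = n - 2 - (q.2 : ℕ) := nxF_rev_val h2
    simp only [Finset.mem_filter, Finset.mem_product, Finset.mem_univ, and_self, true_and]
    refine ⟨q.2.rev, ?_, ?_, ?_⟩
    · rw [Fin.val_rev, hv1]; omega
    · rw [Fin.lt_def, Fin.val_rev, Fin.val_rev]; omega
    · simp only [Fin.rev_rev]
      exact hp
  · -- left inverse
    rintro q hq
    simp only [Finset.mem_filter, Finset.mem_product] at hq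
    obtain ⟨-, i', hi', hlt, -⟩ := hq
    have h1 : (q.1 : ℕ) + 1 < n := by
      have := q.2.isLt; have := Fin.lt_def.mp hlt; omega
    have : nxF ((nxF q.1).rev) = q.1.rev := nxF_rev_nxF h1
    ext
    · simp only [this, Fin.rev_rev]
    · simp only [Fin.rev_rev]
  · -- right inverse
    rintro q hq
    rw [Finset.mem_filter, mem_Tset] at hq
    obtain ⟨⟨-, h2⟩, -⟩ := hq
    have : nxF ((nxF q.2).rev) = q.2.rev := nxF_rev_nxF h2
    ext
    · simp only [Fin.rev_rev]
    · simp only [this, Fin.rev_rev]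

lemma des_eq (w : Fin n → ℕ) :
    desW w = ((Aset n).filter fun i => w (nxF i) < w i).card := by
  rw [desW, Aset, Finset.filter_filter]
  congr 1
  apply Finset.filter_congr
  intro i _
  constructor
  · rintro ⟨j, hj, hlt⟩
    have h1 : (i : ℕ) + 1 < n := by have := j.isLt; omega
    have hje : j = nxF i := Fin.ext (by rw [nxF_val _ h1, hj])
    exact ⟨h1, hje ▸ hlt⟩
  · rintro ⟨h1, hlt⟩
    exact ⟨nxF i, by rw [nxF_val _ h1], hlt⟩

lemma des_rev_eq (w : Fin n → ℕ) :
    desW (fun i => w i.rev) = ((Aset n).filter fun i => w i < w (nxF i)).card := by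
  rw [des_eq]
  apply Finset.card_bij' (i := fun q _ => ((nxF q).rev : Fin n))
    (j := fun q _ => ((nxF q).rev : Fin n))
  · rintro x hx
    rw [Finset.mem_filter, Aset, Finset.mem_filter] at hx ⊢
    obtain ⟨⟨-, h1⟩, hp⟩ := hx
    refine ⟨⟨Finset.mem_univ _, by rw [nxF_rev_val h1]; omega⟩, ?_⟩
    rw [nxF_rev_nxF h1]
    exact hp
  · rintro x hx
    rw [Finset.mem_filter, Aset, Finset.mem_filter] at hx ⊢
    obtain ⟨⟨-, h1⟩, hp⟩ := hx
    refine ⟨⟨Finset.mem_univ _, by rw [nxF_rev_val h1]; omega⟩, ?_⟩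
    rw [nxF_rev_nxF h1]
    simp only [Fin.rev_rev]
    exact hp
  · rintro x hx
    rw [Finset.mem_filter, Aset, Finset.mem_filter] at hx
    obtain ⟨⟨-, h1⟩, -⟩ := hx
    rw [nxF_rev_nxF h1, Fin.rev_rev]
  · rintro x hx
    rw [Finset.mem_filter, Aset, Finset.mem_filter] at hx
    obtain ⟨⟨-, h1⟩, -⟩ := hx
    rw [nxF_rev_nxF h1, Fin.rev_rev]

lemma choose_split (n : ℕ) : n.choose 2 = (n - 1) + (n - 1).choose 2 := by
  cases n with
  | zero => rfl
  | succ m => simp [Nat.choose_succ_succ m 1, Nat.choose_one_right]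

/-- The main combinatorial identity, for any injective word. -/
lemma main_identity (w : Fin n → ℕ) (hw : Function.Injective w) :
    BAST w + STAT (fun i => w i.rev) = n.choose 2 := by
  -- descents
  have hdes : desW w + desW (fun i => w i.rev) = n - 1 := by
    rw [des_eq w, des_rev_eq w, Finset.card_filter, Finset.card_filter,
      ← Finset.sum_add_distrib, ← Aset_card (n := n), Finset.card_eq_sum_ones]
    apply Finset.sum_congr rfl
    intro i hi
    rw [Aset, Finset.mem_filter] at hi
    have hne : w (nxF i) ≠ w i := fun h => by
      have := hw h
      have := congrArg Fin.val this
      rw [nxF_val _ hi.2] at this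
      omega
    split_ifs <;> omega
  -- the six triple patterns
  have h1 : pat2_13 w = pcnt w (fun a b c => b < a ∧ a < c) :=
    bast_pat_eq w (fun a b c => b < a ∧ a < c)
  have h2 : pat1_32 w = pcnt w (fun a b c => a < c ∧ c < b) :=
    bast_pat_eq w (fun a b c => a < c ∧ c < b)
  have h3 : pat3_21 w = pcnt w (fun a b c => c < b ∧ b < a) :=
    bast_pat_eq w (fun a b c => c < b ∧ b < a)
  have h4 : pat13_2 (fun i => w i.rev) = pcnt w (fun a b c => c < a ∧ a < b) :=
    stat_pat_eq w (fun x y z => x < z ∧ z < y)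
  have h5 : pat21_3 (fun i => w i.rev) = pcnt w (fun a b c => b < c ∧ c < a) :=
    stat_pat_eq w (fun x y z => y < x ∧ x < z)
  have h6 : pat32_1 (fun i => w i.rev) = pcnt w (fun a b c => a < b ∧ b < c) :=
    stat_pat_eq w (fun x y z => z < y ∧ y < x)
  have htrip : pcnt w (fun a b c => b < a ∧ a < c) + pcnt w (fun a b c => a < c ∧ c < b)
      + pcnt w (fun a b c => c < b ∧ b < a) + pcnt w (fun a b c => c < a ∧ a < b)
      + pcnt w (fun a b c => b < c ∧ c < a) + pcnt w (fun a b c => a < b ∧ b < c)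
      = (n - 1).choose 2 := by
    rw [← Tset_card (n := n)]
    simp only [pcnt, Finset.card_filter]
    rw [← Finset.sum_add_distrib, ← Finset.sum_add_distrib, ← Finset.sum_add_distrib,
      ← Finset.sum_add_distrib, ← Finset.sum_add_distrib, Finset.card_eq_sum_ones]
    apply Finset.sum_congr rfl
    intro q hq
    rw [mem_Tset] at hq
    obtain ⟨hlt, h2n⟩ := hq
    have hne1 : w q.1 ≠ w q.2 := fun h => absurd (hw h) (ne_of_lt hlt)
    have hne2 : w q.1 ≠ w (nxF q.2) := fun h => by
      have := congrArg Fin.val (hw h)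
      rw [nxF_val _ h2n] at this
      have := Fin.lt_def.mp hlt
      omega
    have hne3 : w q.2 ≠ w (nxF q.2) := fun h => by
      have := congrArg Fin.val (hw h)
      rw [nxF_val _ h2n] at this
      omega
    split_ifs <;> omega
  rw [BAST, STAT, h1, h2, h3, h4, h5, h6, choose_split n]
  omega

/-- For every π ∈ Sₙ, `BAST(π) + STAT(r(π)) = C(n,2)` and `BAST(r(π)) + STAT(π) = C(n,2)`,
where `r` is the reversal. -/
theorem stmt17 (n : ℕ) (π : Equiv.Perm (Fin n)) :
    BAST (pw π) + STAT (fun i => pw π i.rev) = n.choose 2 ∧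
      BAST (fun i => pw π i.rev) + STAT (pw π) = n.choose 2 := by
  have hinj : Function.Injective (pw π) := by
    intro a b h
    have h' : (π a : ℕ) + 1 = (π b : ℕ) + 1 := h
    exact π.injective (Fin.ext (by omega))
  constructor
  · exact main_identity (pw π) hinj
  · have hinj' : Function.Injective (fun i : Fin n => pw π i.rev) :=
      fun a b h => Fin.rev_injective (hinj h)
    have := main_identity (fun i : Fin n => pw π i.rev) hinj'
    simpa [Fin.rev_rev] using this
end

section
/- For all n ≥ k ≥ 1, any composition β of n, and any ordered multiset partition μ of weight β with k blocks, maj(μ) + binom(k,2) = bmajMIL(μ). -/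
namespace OMP

/-- The letters of a block, listed in decreasing order. -/
def blockList {k : ℕ} (B : Fin k → Finset ℕ) (b : Fin k) : List ℕ :=
  ((B b).sort (· ≤ ·)).reverse

/-- The word σ(μ) (blocks written in decreasing order, concatenated), with each
letter tagged by the minimum of its block. -/
def tagged {k : ℕ} (B : Fin k → Finset ℕ) : List (ℕ × ℕ) :=
  (List.finRange k).flatMap fun b =>
    (blockList B b).map fun v => (v, ((B b).sort (· ≤ ·)).headD 0)

/-- maj(μ) = Σ_{i : σ_i > σ_{i+1}} w_i, where w_i is the number of block minima
among the first i letters of σ(μ). -/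
def majOMP {k : ℕ} (B : Fin k → Finset ℕ) : ℕ :=
  ∑ i ∈ Finset.range ((tagged B).length - 1),
    if ((tagged B).getD (i + 1) (0, 0)).1 < ((tagged B).getD i (0, 0)).1 then
      ((Finset.range (i + 1)).filter fun j =>
        ((tagged B).getD j (0, 0)).1 = ((tagged B).getD j (0, 0)).2).card
    else 0

/-- The largest letter appearing in μ. -/
def maxLetter {k : ℕ} (B : Fin k → Finset ℕ) : ℕ :=
  Finset.univ.sup fun b => (B b).sup id

/-- The URG word ι(μ): for each letter j = 1, 2, ... in turn, list the (1-based)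
indices of the blocks containing j, in increasing order. -/
def iota {k : ℕ} (B : Fin k → Finset ℕ) : List ℕ :=
  (List.range (maxLetter B)).flatMap fun j =>
    ((List.finRange k).filter fun b => (j + 1) ∈ B b).map fun b => (b : ℕ) + 1

/-- MIL(u) = Σᵢ (uᵢ − 1). -/
def MIL (u : List ℕ) : ℕ := (u.map fun x => x - 1).sum

/-- bMAJ(u) = Σᵢ i·χ(i ≻ i+1), where `i ≻ i+1` iff the leftmost occurrence of the
letter i lies strictly to the right of the rightmost occurrence of the letter i+1. -/
def bMAJ (k : ℕ) (u : List ℕ) : ℕ :=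
  ∑ i ∈ Finset.range k,
    if u.length - 1 - u.reverse.idxOf (i + 1) < u.idxOf i then i else 0

/-- bmajMIL(μ) = bMAJ(ι(μ)) + MIL(ι(μ)). -/
def bmajMIL {k : ℕ} (B : Fin k → Finset ℕ) : ℕ :=
  bMAJ k (iota B) + MIL (iota B)

end OMP

/-!
Reading σ(μ), every step inside a block is a descent, at which `w` counts the minima of the
earlier blocks, and the step from block `b` to block `b + 1` (numbered from `0`) is a descent
exactly when `B (b + 1)` lies entirely below `B b`, where `w = b + 1`. Hence
`maj μ = ∑ b, b * (|B b| - 1) + ∑ {b | B (b + 1) < B b}, (b + 1)`.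
In ι(μ) the letter `b + 1` occurs `|B b|` times, so `MIL = ∑ b, b * |B b|`; and since ι(μ) lists
the pairs (letter, block) lexicographically, every `b + 2` precedes every `b + 1` exactly when
`B (b + 1)` lies entirely below `B b`, so `bMAJ` is the second sum above. The difference of the
two sides is `∑ b, b = C(k, 2)`.
-/

namespace OMP

open Finset
open scoped List

section Occurrences

variable {α : Type*} [DecidableEq α] {L R u : List α} {x y : α}

theorem lastIdx_lt_idxOf_append (hyL : y ∈ L) (hxL : x ∉ L) (hyR : y ∉ R) :
    (L ++ R).length - 1 - (L ++ R).reverse.idxOf y < (L ++ R).idxOf x := by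
  have hx : (L ++ R).idxOf x = L.length + R.idxOf x := List.idxOf_append_of_notMem hxL
  have hy : (L ++ R).reverse.idxOf y = R.length + L.reverse.idxOf y := by
    rw [List.reverse_append, List.idxOf_append_of_notMem (by simpa using hyR), List.length_reverse]
  have hyL' : L.reverse.idxOf y < L.length := by
    simpa using List.idxOf_lt_length_iff.2 (List.mem_reverse.2 hyL)
  simp only [List.length_append]
  omega

theorem not_lastIdx_lt_idxOf_of_sublist (h : [x, y] <+ u) :
    ¬ u.length - 1 - u.reverse.idxOf y < u.idxOf x := by
  obtain ⟨L, R, rfl, hxL, hyR⟩ := List.cons_sublist_iff.1 h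
  rw [List.singleton_sublist] at hyR
  have hx : (L ++ R).idxOf x < L.length := by
    rw [List.idxOf_append_of_mem hxL]; exact List.idxOf_lt_length_iff.2 hxL
  have hy : (L ++ R).reverse.idxOf y < R.length := by
    rw [List.reverse_append, List.idxOf_append_of_mem (List.mem_reverse.2 hyR)]
    simpa using List.idxOf_lt_length_iff.2 (List.mem_reverse.2 hyR)
  simp only [List.length_append]
  omega

end Occurrences

theorem pair_sublist_of_pairwise {α : Type*} [PartialOrder α] {l : List α}
    (hl : l.Pairwise (· ≤ ·)) {x y : α} (hx : x ∈ l) (hy : y ∈ l) (hxy : x < y) : [x, y] <+ l :=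
  List.sublist_of_subperm_of_pairwise
    (List.subperm_of_subset (by simp [hxy.ne]) (by simp [hx, hy])) (by simp [hxy.le]) hl

theorem sum_list_range_map {M : Type*} [AddCommMonoid M] (f : ℕ → M) (n : ℕ) :
    ((List.range n).map f).sum = ∑ i ∈ range n, f i := by
  rw [Finset.sum, range_val, Multiset.range, Multiset.map_coe, Multiset.sum_coe]

section Tagged

variable {s : Finset ℕ} {A : List (ℕ × ℕ)} {C : ℕ → Finset ℕ} {k : ℕ}

def tagBlock (s : Finset ℕ) : List (ℕ × ℕ) :=
  (s.sort (· ≤ ·)).reverse.map fun v => (v, (s.sort (· ≤ ·)).headD 0)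

def tagWord (C : ℕ → Finset ℕ) (k : ℕ) : List (ℕ × ℕ) :=
  (List.range k).flatMap fun i => tagBlock (C i)

-- `minCount l t` is the paper's `w_t`: a letter is a block minimum iff it equals its tag
def minCount (l : List (ℕ × ℕ)) (t : ℕ) : ℕ :=
  ((range t).filter fun j => (l.getD j (0, 0)).1 = (l.getD j (0, 0)).2).card

def majTerm (l : List (ℕ × ℕ)) (i : ℕ) : ℕ :=
  if (l.getD (i + 1) (0, 0)).1 < (l.getD i (0, 0)).1 then minCount l (i + 1) else 0

def majTagged (l : List (ℕ × ℕ)) : ℕ :=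
  ∑ i ∈ range (l.length - 1), majTerm l i

theorem majOMP_eq_majTagged {k : ℕ} (B : Fin k → Finset ℕ) : majOMP B = majTagged (tagged B) :=
  rfl

@[simp]
theorem length_tagBlock (s : Finset ℕ) : (tagBlock s).length = s.card := by
  simp [tagBlock]

theorem tagBlock_getD (hs : s.Nonempty) {p : ℕ} (hp : p < s.card) :
    (tagBlock s).getD p (0, 0)
      = ((s.sort (· ≤ ·))[s.card - 1 - p]'(by rw [length_sort]; omega), s.min' hs) := by
  rw [List.getD_eq_getElem _ _ (by simpa using hp)]
  simp only [tagBlock, List.getElem_map, List.getElem_reverse, Prod.mk.injEq, length_sort, true_and]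
  rw [List.headD_eq_head?_getD, List.head?_eq_getElem?,
    List.getElem?_eq_getElem (by rw [length_sort]; omega)]
  exact sorted_zero_eq_min'

theorem fst_tagBlock_getD_succ_lt (hs : s.Nonempty) {p : ℕ} (hp : p + 1 < s.card) :
    ((tagBlock s).getD (p + 1) (0, 0)).1 < ((tagBlock s).getD p (0, 0)).1 := by
  rw [tagBlock_getD hs hp, tagBlock_getD hs (by omega)]
  exact List.pairwise_iff_getElem.1 (sortedLT_sort s).pairwise _ _ _ _ (by omega)

theorem fst_tagBlock_getD_zero (hs : s.Nonempty) :
    ((tagBlock s).getD 0 (0, 0)).1 = s.max' hs := by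
  rw [tagBlock_getD hs (card_pos.2 hs), max'_eq_sorted_last]
  simp

theorem tagBlock_getD_isMin_iff (hs : s.Nonempty) {p : ℕ} (hp : p < s.card) :
    ((tagBlock s).getD p (0, 0)).1 = ((tagBlock s).getD p (0, 0)).2 ↔ p = s.card - 1 := by
  rw [tagBlock_getD hs hp, min'_eq_sorted_zero,
    (sort_nodup s (· ≤ ·)).getElem_inj_iff]
  omega

theorem minCount_append_of_le {B : List (ℕ × ℕ)} {t : ℕ} (ht : t ≤ A.length) :
    minCount (A ++ B) t = minCount A t := by
  unfold minCount
  congr 1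
  refine filter_congr fun j hj => ?_
  rw [List.getD_append _ _ _ _ ((mem_range.1 hj).trans_le ht)]

theorem minCount_append (A B : List (ℕ × ℕ)) (t : ℕ) :
    minCount (A ++ B) (A.length + t) = minCount A A.length + minCount B t := by
  unfold minCount
  rw [card_filter, card_filter, card_filter, sum_range_add]
  congr 1
  · refine sum_congr rfl fun j hj => ?_
    rw [List.getD_append _ _ _ _ (by simpa using hj)]
  · refine sum_congr rfl fun j _ => ?_
    rw [List.getD_append_right _ _ _ _ (by omega), Nat.add_sub_cancel_left]

theorem minCount_tagBlock (hs : s.Nonempty) {t : ℕ} (ht : t ≤ s.card) :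
    minCount (tagBlock s) t = if t = s.card then 1 else 0 := by
  have hc := card_pos.2 hs
  have : (range t).filter (fun j => ((tagBlock s).getD j (0, 0)).1 = ((tagBlock s).getD j (0, 0)).2)
      = (range t).filter (· = s.card - 1) :=
    filter_congr fun j hj => tagBlock_getD_isMin_iff hs ((mem_range.1 hj).trans_le ht)
  rw [minCount, this, filter_eq']
  simp only [apply_ite card, card_singleton, card_empty, mem_range]
  split_ifs <;> omega

theorem majTerm_append_of_lt {B : List (ℕ × ℕ)} {i : ℕ} (hi : i + 1 < A.length) :
    majTerm (A ++ B) i = majTerm A i := by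
  rw [majTerm, majTerm, List.getD_append _ _ _ _ hi, List.getD_append _ _ _ _ (by omega),
    minCount_append_of_le hi.le]

theorem majTerm_append_tagBlock_last (hs : s.Nonempty) (hA : A ≠ []) :
    majTerm (A ++ tagBlock s) (A.length - 1)
      = if s.max' hs < (A.getD (A.length - 1) (0, 0)).1 then minCount A A.length else 0 := by
  have := List.length_pos_iff.2 hA
  rw [majTerm, Nat.sub_add_cancel this, List.getD_append_right _ _ _ _ le_rfl, Nat.sub_self,
    fst_tagBlock_getD_zero hs, List.getD_append _ _ _ _ (by omega), minCount_append_of_le le_rfl]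

theorem majTerm_append_tagBlock (hs : s.Nonempty) {p : ℕ} (hp : p + 1 < s.card) :
    majTerm (A ++ tagBlock s) (A.length + p) = minCount A A.length := by
  rw [majTerm, List.getD_append_right _ _ _ _ (by omega),
    List.getD_append_right _ _ _ _ (by omega), Nat.add_sub_cancel_left,
    show A.length + p + 1 - A.length = p + 1 by omega, if_pos (fst_tagBlock_getD_succ_lt hs hp),
    add_assoc, minCount_append, minCount_tagBlock hs hp.le, if_neg hp.ne, add_zero]

theorem majTagged_append_tagBlock (A : List (ℕ × ℕ)) (hs : s.Nonempty) :
    majTagged (A ++ tagBlock s) = majTagged A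
      + (if s.max' hs < (A.getD (A.length - 1) (0, 0)).1 then minCount A A.length else 0)
      + (s.card - 1) * minCount A A.length := by
  have hprefix : ∑ i ∈ range A.length, majTerm (A ++ tagBlock s) i = majTagged A
      + (if s.max' hs < (A.getD (A.length - 1) (0, 0)).1 then minCount A A.length else 0) := by
    obtain rfl | hA := eq_or_ne A []
    · simp [majTagged]
    have hpos := List.length_pos_iff.2 hA
    rw [show range A.length = range (A.length - 1 + 1) by rw [Nat.sub_add_cancel hpos],
      sum_range_succ, majTerm_append_tagBlock_last hs hA, majTagged]
    congr 1
    exact sum_congr rfl fun i hi => majTerm_append_of_lt (by have := mem_range.1 hi; omega)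
  have hc := card_pos.2 hs
  rw [majTagged, List.length_append, length_tagBlock,
    show A.length + s.card - 1 = A.length + (s.card - 1) by omega, sum_range_add, hprefix,
    sum_congr rfl fun p hp => majTerm_append_tagBlock hs (by have := mem_range.1 hp; omega),
    sum_const, card_range, smul_eq_mul]

theorem tagWord_succ (C : ℕ → Finset ℕ) (k : ℕ) :
    tagWord C (k + 1) = tagWord C k ++ tagBlock (C k) := by
  simp [tagWord, List.range_succ]

theorem minCount_tagWord (hne : ∀ i < k, (C i).Nonempty) :
    minCount (tagWord C k) (tagWord C k).length = k := by
  induction k with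
  | zero => simp [tagWord, minCount]
  | succ k ih =>
    rw [tagWord_succ, List.length_append, minCount_append, ih fun i hi => hne i (by omega),
      length_tagBlock, minCount_tagBlock (hne k (by omega)) le_rfl, if_pos rfl]

theorem tagWord_getD_last (hs : (C k).Nonempty) :
    (tagWord C (k + 1)).getD ((tagWord C (k + 1)).length - 1) (0, 0)
      = ((C k).min' hs, (C k).min' hs) := by
  have hc := card_pos.2 hs
  rw [tagWord_succ, List.length_append, length_tagBlock, List.getD_append_right _ _ _ _ (by omega),
    show (tagWord C k).length + (C k).card - 1 - (tagWord C k).length = (C k).card - 1 by omega,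
    tagBlock_getD hs (by omega)]
  simp [min'_eq_sorted_zero]

-- the `i`-th term is `i * χ(i ≻ i + 1)` of `bMAJ (ι μ)`, with blocks numbered from `0`
def blockDescentMaj (C : ℕ → Finset ℕ) (k : ℕ) : ℕ :=
  ∑ i ∈ range k, if ∀ x ∈ C i, ∀ y ∈ C i.pred, x < y then i else 0

theorem boundaryDescent_tagWord (hne : ∀ i < k + 1, (C i).Nonempty) :
    (if (C k).max' (hne k k.lt_succ_self) < ((tagWord C k).getD ((tagWord C k).length - 1) (0, 0)).1
      then minCount (tagWord C k) (tagWord C k).length else 0)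
      = if ∀ x ∈ C k, ∀ y ∈ C k.pred, x < y then k else 0 := by
  rw [minCount_tagWord fun i hi => hne i (by omega)]
  rcases k with _ | k
  · simp
  · rw [tagWord_getD_last (hne k (by omega))]
    simp only [max'_lt_iff]
    simp [lt_min'_iff]

theorem majTagged_tagWord (hne : ∀ i < k, (C i).Nonempty) :
    majTagged (tagWord C k) + k.choose 2
      = ∑ i ∈ range k, i * (C i).card + blockDescentMaj C k := by
  induction k with
  | zero => simp [tagWord, majTagged, blockDescentMaj]
  | succ k ih =>
    have hc := card_pos.2 (hne k k.lt_succ_self)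
    have hchoose : (k + 1).choose 2 = k.choose 1 + k.choose 2 := Nat.choose_succ_succ' k 1
    rw [tagWord_succ, majTagged_append_tagBlock _ (hne k k.lt_succ_self),
      boundaryDescent_tagWord hne,
      minCount_tagWord fun i hi => hne i (by omega), hchoose, Nat.choose_one_right,
      blockDescentMaj, sum_range_succ, sum_range_succ, ← blockDescentMaj]
    have hmul : ((C k).card - 1) * k + k = k * (C k).card := by
      rw [← Nat.succ_mul, Nat.succ_eq_add_one, Nat.sub_add_cancel hc, mul_comm]
    have := ih fun i hi => hne i (by omega)
    omega

end Tagged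

section Urg

variable {C : ℕ → Finset ℕ} {k m : ℕ}

def urgSegment (C : ℕ → Finset ℕ) (k j : ℕ) : List ℕ :=
  ((List.range k).filter fun i => j + 1 ∈ C i).map (· + 1)

def urgWord (C : ℕ → Finset ℕ) (k m : ℕ) : List ℕ :=
  (List.range m).flatMap (urgSegment C k)

theorem succ_mem_urgSegment {b j : ℕ} : b + 1 ∈ urgSegment C k j ↔ b < k ∧ j + 1 ∈ C b := by
  simp [urgSegment]

theorem succ_mem_flatMap_urgSegment {b : ℕ} {l : List ℕ} :
    b + 1 ∈ l.flatMap (urgSegment C k) ↔ b < k ∧ ∃ j ∈ l, j + 1 ∈ C b := by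
  simp only [List.mem_flatMap, succ_mem_urgSegment]
  tauto

theorem pairwise_urgSegment (C : ℕ → Finset ℕ) (k j : ℕ) :
    (urgSegment C k j).Pairwise (· ≤ ·) :=
  List.pairwise_map.2 <| (List.pairwise_lt_range.filter _).imp fun h => by omega

theorem MIL_urgSegment (C : ℕ → Finset ℕ) (k j : ℕ) :
    MIL (urgSegment C k j) = ∑ i ∈ range k with j + 1 ∈ C i, i := by
  rw [MIL, urgSegment, List.map_map]
  simp only [Function.comp_def, Nat.add_sub_cancel, List.map_id']
  rw [Finset.sum, filter_val, range_val, Multiset.range, Multiset.filter_coe, Multiset.map_coe,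
    Multiset.sum_coe, List.map_id']

theorem card_filter_succ_mem {s : Finset ℕ} (hs : ∀ x ∈ s, 1 ≤ x ∧ x ≤ m) :
    ((range m).filter (· + 1 ∈ s)).card = s.card :=
  card_nbij' (· + 1) (· - 1) (fun j hj => (mem_filter.1 hj).2)
    (fun x hx => by
      have := hs x hx
      simp only [coe_filter, mem_range, Set.mem_ofPred_eq, Nat.sub_add_cancel this.1]
      exact ⟨by omega, hx⟩)
    (fun _ _ => rfl) (fun x hx => Nat.sub_add_cancel (hs x hx).1)

theorem MIL_urgWord (hbd : ∀ i < k, ∀ x ∈ C i, 1 ≤ x ∧ x ≤ m) :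
    MIL (urgWord C k m) = ∑ i ∈ range k, i * (C i).card := by
  rw [MIL, urgWord, List.map_flatMap, List.flatMap_def, List.sum_flatten, List.map_map]
  change ((List.range m).map fun j => MIL (urgSegment C k j)).sum = _
  simp only [sum_list_range_map, MIL_urgSegment, sum_filter]
  rw [sum_comm]
  refine sum_congr rfl fun i hi => ?_
  rw [← sum_filter, sum_const, smul_eq_mul, card_filter_succ_mem (hbd i (mem_range.1 hi)),
    mul_comm]

theorem lastIdx_lt_idxOf_urgWord {b : ℕ} (hb : b + 1 < k) (h₁ : (C (b + 1)).Nonempty)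
    (hbd : ∀ i < k, ∀ x ∈ C i, 1 ≤ x ∧ x ≤ m) (h : ∀ x ∈ C (b + 1), ∀ y ∈ C b, x < y) :
    (urgWord C k m).length - 1 - (urgWord C k m).reverse.idxOf (b + 1 + 1)
      < (urgWord C k m).idxOf (b + 1) := by
  -- every `b + 2` comes from a letter `≤ M`, every `b + 1` from a letter `> M`
  set M := (C (b + 1)).max' h₁
  have hM := (C (b + 1)).max'_mem h₁
  have hM1 := (hbd (b + 1) hb M hM).1
  have hsplit : urgWord C k m = (List.range M).flatMap (urgSegment C k)
      ++ ((List.range (m - M)).map (M + ·)).flatMap (urgSegment C k) := by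
    rw [urgWord, ← List.flatMap_append, ← List.range_add,
      Nat.add_sub_cancel' (hbd (b + 1) hb M hM).2]
  rw [hsplit]
  apply lastIdx_lt_idxOf_append
  · refine succ_mem_flatMap_urgSegment.2 ⟨hb, M - 1, List.mem_range.2 (by omega), ?_⟩
    rwa [Nat.sub_add_cancel hM1]
  · rw [succ_mem_flatMap_urgSegment]
    rintro ⟨-, j, hj, hjC⟩
    have := h M hM (j + 1) hjC
    have := List.mem_range.1 hj
    omega
  · rw [succ_mem_flatMap_urgSegment]
    rintro ⟨-, j, hj, hjC⟩
    have := (C (b + 1)).le_max' _ hjC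
    simp only [List.mem_map, List.mem_range] at hj
    omega

theorem pair_sublist_urgWord {b x y : ℕ} (hb : b + 1 < k)
    (hbd : ∀ i < k, ∀ x ∈ C i, 1 ≤ x ∧ x ≤ m) (hx : x ∈ C (b + 1)) (hy : y ∈ C b) (hyx : y ≤ x) :
    [b + 1, b + 1 + 1] <+ urgWord C k m := by
  obtain ⟨hx1, hxm⟩ := hbd (b + 1) hb x hx
  have hy1 := (hbd b (by omega) y hy).1
  have hxseg : b + 1 + 1 ∈ urgSegment C k (x - 1) :=
    succ_mem_urgSegment.2 ⟨hb, by rwa [Nat.sub_add_cancel hx1]⟩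
  have hyseg : b + 1 ∈ urgSegment C k (y - 1) :=
    succ_mem_urgSegment.2 ⟨by omega, by rwa [Nat.sub_add_cancel hy1]⟩
  rcases hyx.lt_or_eq with hlt | rfl
  · have hrange : [y - 1, x - 1] <+ List.range m :=
      pair_sublist_of_pairwise (List.pairwise_lt_range.imp le_of_lt)
        (List.mem_range.2 (by omega)) (List.mem_range.2 (by omega)) (by omega)
    have := hrange.flatMap (urgSegment C k)
    simp only [List.flatMap_cons, List.flatMap_nil, List.append_nil] at this
    exact ((List.singleton_sublist.2 hyseg).append (List.singleton_sublist.2 hxseg)).trans this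
  · exact (pair_sublist_of_pairwise (pairwise_urgSegment C k _) hyseg hxseg (by omega)).trans
      (List.infix_flatMap_of_mem (List.mem_range.2 (by omega)) _).sublist

theorem lastIdx_lt_idxOf_urgWord_iff {b : ℕ} (hb : b + 1 < k) (h₁ : (C (b + 1)).Nonempty)
    (hbd : ∀ i < k, ∀ x ∈ C i, 1 ≤ x ∧ x ≤ m) :
    (urgWord C k m).length - 1 - (urgWord C k m).reverse.idxOf (b + 1 + 1)
        < (urgWord C k m).idxOf (b + 1)
      ↔ ∀ x ∈ C (b + 1), ∀ y ∈ C b, x < y := by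
  refine ⟨fun hlt => ?_, lastIdx_lt_idxOf_urgWord hb h₁ hbd⟩
  by_contra h
  push Not at h
  obtain ⟨x, hx, y, hy, hyx⟩ := h
  exact not_lastIdx_lt_idxOf_of_sublist (pair_sublist_urgWord hb hbd hx hy hyx) hlt

theorem bMAJ_urgWord (hne : ∀ i < k, (C i).Nonempty) (hbd : ∀ i < k, ∀ x ∈ C i, 1 ≤ x ∧ x ≤ m) :
    bMAJ k (urgWord C k m) = blockDescentMaj C k := by
  refine sum_congr rfl fun i hi => ?_
  rcases i with _ | b
  · simp
  · have hb : b + 1 < k := by simpa using hi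
    exact if_congr (lastIdx_lt_idxOf_urgWord_iff hb (hne _ hb) hbd) rfl rfl

end Urg

section Bridge

variable {k : ℕ}

def blockFamily (B : Fin k → Finset ℕ) (i : ℕ) : Finset ℕ :=
  if h : i < k then B ⟨i, h⟩ else ∅

theorem blockFamily_of_lt (B : Fin k → Finset ℕ) {i : ℕ} (hi : i < k) :
    blockFamily B i = B ⟨i, hi⟩ :=
  dif_pos hi

@[simp]
theorem blockFamily_val (B : Fin k → Finset ℕ) (b : Fin k) : blockFamily B b = B b :=
  blockFamily_of_lt B b.isLt

theorem le_maxLetter (B : Fin k → Finset ℕ) {b : Fin k} {x : ℕ} (hx : x ∈ B b) :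
    x ≤ maxLetter B :=
  (le_sup (f := id) hx).trans (le_sup (f := fun b => (B b).sup id) (mem_univ b))

theorem tagged_eq_tagWord (B : Fin k → Finset ℕ) : tagged B = tagWord (blockFamily B) k := by
  rw [tagWord, ← List.map_coe_finRange_eq_range, List.flatMap_map]
  simp [tagged, tagBlock, blockList]

theorem iota_eq_urgWord (B : Fin k → Finset ℕ) :
    iota B = urgWord (blockFamily B) k (maxLetter B) := by
  rw [iota, urgWord]
  congr 1
  funext j
  rw [urgSegment, ← List.map_coe_finRange_eq_range, List.filter_map, List.map_map]
  simp only [bind_pure_comp, List.map_eq_map, List.map_map, Function.comp_def, blockFamily_val]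

end Bridge

end OMP

theorem stmt19_general (k : ℕ) (B : Fin k → Finset ℕ)
    (hne : ∀ b, (B b).Nonempty) (hpos : ∀ b, ∀ x ∈ B b, 1 ≤ x) :
    OMP.majOMP B + k.choose 2 = OMP.bmajMIL B := by
  have hfam : ∀ i < k, (OMP.blockFamily B i).Nonempty := fun i hi => by
    rw [OMP.blockFamily_of_lt B hi]
    exact hne _
  have hbd : ∀ i < k, ∀ x ∈ OMP.blockFamily B i, 1 ≤ x ∧ x ≤ OMP.maxLetter B := fun i hi x hx => by
    rw [OMP.blockFamily_of_lt B hi] at hx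
    exact ⟨hpos _ x hx, OMP.le_maxLetter B hx⟩
  rw [OMP.bmajMIL, OMP.iota_eq_urgWord, OMP.bMAJ_urgWord hfam hbd, OMP.MIL_urgWord hbd,
    OMP.majOMP_eq_majTagged, OMP.tagged_eq_tagWord, OMP.majTagged_tagWord hfam, add_comm]

/-- For any ordered multiset partition μ of weight a composition of n with k blocks,
`maj(μ) + C(k,2) = bmajMIL(μ)`. -/
theorem stmt19 (n k : ℕ) (hk : 1 ≤ k) (hkn : k ≤ n) (B : Fin k → Finset ℕ)
    (hne : ∀ b, (B b).Nonempty) (hpos : ∀ b, ∀ x ∈ B b, 1 ≤ x)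
    (hsize : ∑ b, (B b).card = n)
    (hcomp : ∀ j, 1 ≤ j → j ≤ OMP.maxLetter B → ∃ b, j ∈ B b) :
    OMP.majOMP B + k.choose 2 = OMP.bmajMIL B :=
  stmt19_general k B hne hpos
end
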